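/- For every integer k ≥ 1, d_k·d_{k-1} + 1 = (2(s_k·s_{k-1} + 1))^2, where (d_k) is defined by d_0 = -1, d_1 = -3, d_{k+2} = 14d_{k+1} - d_k + 8 and (s_k) by s_0 = 0, s_1 = 1, s_{k+2} = 4s_{k+1} - s_k. -/
import Mathlib


def d : ℕ → ℤ
  | 0 => -1
  | 1 => -3
  | (l+2) => 14 * d (l+1) - d l + 8

def s : ℕ → ℤ
  | 0 => 0
  | 1 => 1
  | (k+2) => 4 * s (k+1) - s k

lemma s_inv : ∀ k : ℕ, s (k+1) ^ 2 - 4 * s (k+1) * s k + s k ^ 2 = 1 := by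
  intro k
  induction k with
  | zero => simp [s]
  | succ n ih => simp only [s]; ring_nf; ring_nf at ih; linarith

lemma d_eq : ∀ k : ℕ, d k = -(2 * s k ^ 2 + 1) := by
  intro k
  induction k using Nat.strong_induction_on with
  | _ k ih =>
    match k with
    | 0 => simp [d, s]
    | 1 => simp [d, s]
    | (n+2) =>
      have h1 := ih (n+1) (by omega)
      have h0 := ih n (by omega)
      have hs := s_inv n
      simp only [d, s, h1, h0]
      linear_combination 4 * hs

theorem stmt_13 : ∀ k : ℕ, 1 ≤ k →
    d k * d (k-1) + 1 = (2 * (s k * s (k-1) + 1))^2 := by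
  rintro (_ | k) hk
  · omega
  · simp only [Nat.add_sub_cancel, d_eq]
    have hs := s_inv k
    ring_nf; ring_nf at hs; nlinarith [sq_nonneg (s k), sq_nonneg (s (k+1))]
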